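/- Let K be algebraically closed and I = (f_1, …, f_r) ⊴ K[x]. Then V*(I) is closed under matrix multiplication if and only if f_i(xy) ∈ √(Î_xy) for every 1 ≤ i ≤ r, where f_i(xy) ∈ K[x̂, ŷ] denotes the polynomial obtained from f_i by substituting for each indeterminate x_k the corresponding entry of the product X·Y of the matrix X of x-indeterminates with the matrix Y of y-indeterminates. -/

import Mathlib

open MvPolynomial

/-- Evaluation of a polynomial in the `n²` indeterminates at an `n × n` matrix. -/
noncomputable def matEval {n : ℕ} {K : Type*} [Field K] (v : Matrix (Fin n) (Fin n) K) :
    MvPolynomial (Fin n × Fin n) K →+* K :=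
  MvPolynomial.eval (fun p => v p.1 p.2)

/-- `V(I)`: the matrices annihilating every polynomial of `I`. -/
def Vset {n : ℕ} {K : Type*} [Field K] (I : Ideal (MvPolynomial (Fin n × Fin n) K)) :
    Set (Matrix (Fin n) (Fin n) K) :=
  {v | ∀ f ∈ I, matEval v f = 0}

/-- `V*(I) = V(I) ∩ GL(n,K)`: the invertible matrices in `V(I)`. -/
def Vstar {n : ℕ} {K : Type*} [Field K] (I : Ideal (MvPolynomial (Fin n × Fin n) K)) :
    Set (Matrix (Fin n) (Fin n) K) :=
  {v | v ∈ Vset I ∧ IsUnit v}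

/-- `det(x)`, the determinant of the matrix of indeterminates. -/
noncomputable def detPoly (n : ℕ) (K : Type*) [Field K] : MvPolynomial (Fin n × Fin n) K :=
  (Matrix.of fun i j => MvPolynomial.X (i, j)).det

/-- `f₀ = x₀ · det(x) − 1 ∈ K[x̂]`, where `x₀` is the extra indeterminate `none`. -/
noncomputable def fzero (n : ℕ) (K : Type*) [Field K] :
    MvPolynomial (Option (Fin n × Fin n)) K :=
  MvPolynomial.X none * MvPolynomial.rename some (detPoly n K) - 1

/-- `Î = I·K[x̂] + (f₀)`. -/
noncomputable def Ihat {n : ℕ} {K : Type*} [Field K]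
    (I : Ideal (MvPolynomial (Fin n × Fin n) K)) :
    Ideal (MvPolynomial (Option (Fin n × Fin n)) K) :=
  Ideal.map (MvPolynomial.rename (some : Fin n × Fin n → Option (Fin n × Fin n))) I
    ⊔ Ideal.span {fzero n K}

/-- Evaluation of a polynomial in `K[x̂]` at a pair `(v₀, v) ∈ K ⊕ K^{n×n}`. -/
noncomputable def hatEval {n : ℕ} {K : Type*} [Field K] (v₀ : K)
    (v : Matrix (Fin n) (Fin n) K) :
    MvPolynomial (Option (Fin n × Fin n)) K →+* K :=
  MvPolynomial.eval (fun o : Option (Fin n × Fin n) => o.elim v₀ (fun p => v p.1 p.2))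

/-- `V(Ĵ) ⊆ K ⊕ K^{n×n}` for an ideal `Ĵ ⊴ K[x̂]`. -/
def VhatSet {n : ℕ} {K : Type*} [Field K]
    (J : Ideal (MvPolynomial (Option (Fin n × Fin n)) K)) :
    Set (K × Matrix (Fin n) (Fin n) K) :=
  {p | ∀ f ∈ J, hatEval p.1 p.2 f = 0}

/-- `Î_xy = Î·K[x̂,ŷ] + φ(Î)·K[x̂,ŷ] ⊴ K[x̂,ŷ]`, where the left summand of the
variable type is `x̂` and the right one is `ŷ`. -/
noncomputable def Ihatxy {n : ℕ} {K : Type*} [Field K]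
    (I : Ideal (MvPolynomial (Fin n × Fin n) K)) :
    Ideal (MvPolynomial (Option (Fin n × Fin n) ⊕ Option (Fin n × Fin n)) K) :=
  Ideal.map (MvPolynomial.rename
      (Sum.inl : Option (Fin n × Fin n) → Option (Fin n × Fin n) ⊕ Option (Fin n × Fin n)))
      (Ihat I)
    ⊔ Ideal.map (MvPolynomial.rename
      (Sum.inr : Option (Fin n × Fin n) → Option (Fin n × Fin n) ⊕ Option (Fin n × Fin n)))
      (Ihat I)

/-- The `n × n` matrix `X` of `x`-indeterminates, inside `K[x̂,ŷ]`. -/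
noncomputable def Xmat (n : ℕ) (K : Type*) [Field K] :
    Matrix (Fin n) (Fin n)
      (MvPolynomial (Option (Fin n × Fin n) ⊕ Option (Fin n × Fin n)) K) :=
  Matrix.of fun i j => MvPolynomial.X (Sum.inl (some (i, j)))

/-- The `n × n` matrix `Y` of `y`-indeterminates, inside `K[x̂,ŷ]`. -/
noncomputable def Ymat (n : ℕ) (K : Type*) [Field K] :
    Matrix (Fin n) (Fin n)
      (MvPolynomial (Option (Fin n × Fin n) ⊕ Option (Fin n × Fin n)) K) :=
  Matrix.of fun i j => MvPolynomial.X (Sum.inr (some (i, j)))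

/-- The substitution `f ↦ f(xy)`: each indeterminate `x_k` is replaced by the
corresponding entry of the product `X·Y` of the matrix of `x`-indeterminates
with the matrix of `y`-indeterminates. -/
noncomputable def prodSubst (n : ℕ) (K : Type*) [Field K] :
    MvPolynomial (Fin n × Fin n) K →ₐ[K]
      MvPolynomial (Option (Fin n × Fin n) ⊕ Option (Fin n × Fin n)) K :=
  MvPolynomial.aeval (fun p : Fin n × Fin n => (Xmat n K * Ymat n K) p.1 p.2)

/-!
The points of `V(Î)` are the pairs `(det(v)⁻¹, v)` with `v ∈ V*(I)`, so the points of `V(Î_xy)`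
are the quadruples `(det(v)⁻¹, v, det(w)⁻¹, w)` with `v, w ∈ V*(I)`, and `f(xy)` takes the value
`f(vw)` there. By the Nullstellensatz, `f(xy) ∈ √(Î_xy)` iff `f(vw) = 0` for all `v, w ∈ V*(I)`.
Since `vw` is invertible anyway, `vw ∈ V*(I)` iff `fᵢ(vw) = 0` for all `i`.
-/

namespace MvPolynomial

theorem mem_radical_iff_forall_eval_eq_zero {σ K : Type*} [Field K] [IsAlgClosed K] [Finite σ]
    {J : Ideal (MvPolynomial σ K)} {g : MvPolynomial σ K} :
    g ∈ J.radical ↔ ∀ P : σ → K, J ≤ RingHom.ker (eval P) → eval P g = 0 := by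
  rw [← vanishingIdeal_zeroLocus_eq_radical (K := K), mem_vanishingIdeal_iff]
  rfl

theorem map_rename_le_ker_eval_iff {σ τ R : Type*} [CommSemiring R] (J : Ideal (MvPolynomial σ R))
    (k : σ → τ) (P : τ → R) :
    J.map (rename k) ≤ RingHom.ker (eval P) ↔ J ≤ RingHom.ker (eval (P ∘ k)) := by
  rw [Ideal.map_le_iff_le_comap]
  simp only [SetLike.le_def, Ideal.mem_comap, RingHom.mem_ker, eval_rename]

theorem map_rename_sum_le_ker_eval_iff {σ τ R : Type*} [CommSemiring R]
    (J₁ : Ideal (MvPolynomial σ R)) (J₂ : Ideal (MvPolynomial τ R)) (a : σ → R) (b : τ → R) :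
    J₁.map (rename Sum.inl) ⊔ J₂.map (rename Sum.inr) ≤ RingHom.ker (eval (Sum.elim a b)) ↔
      J₁ ≤ RingHom.ker (eval a) ∧ J₂ ≤ RingHom.ker (eval b) := by
  rw [sup_le_iff, map_rename_le_ker_eval_iff, map_rename_le_ker_eval_iff, Sum.elim_comp_inl,
    Sum.elim_comp_inr]

end MvPolynomial

section

variable {n : ℕ} {K : Type*}

def hatPoint (v₀ : K) (v : Matrix (Fin n) (Fin n) K) : Option (Fin n × Fin n) → K :=
  fun o => o.elim v₀ fun p => v p.1 p.2

theorem hatPoint_surjective :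
    Function.Surjective fun q : K × Matrix (Fin n) (Fin n) K => hatPoint q.1 q.2 := by
  intro a
  refine ⟨(a none, Matrix.of fun i j => a (some (i, j))), funext fun o => ?_⟩
  cases o <;> rfl

variable [Field K]

theorem mem_Vset_iff_le_ker {I : Ideal (MvPolynomial (Fin n × Fin n) K)}
    {v : Matrix (Fin n) (Fin n) K} : v ∈ Vset I ↔ I ≤ RingHom.ker (matEval v) :=
  Iff.rfl

theorem mem_Vset_span_range_iff {r : ℕ} (f : Fin r → MvPolynomial (Fin n × Fin n) K)
    (v : Matrix (Fin n) (Fin n) K) :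
    v ∈ Vset (Ideal.span (Set.range f)) ↔ ∀ i, matEval v (f i) = 0 := by
  rw [mem_Vset_iff_le_ker, Ideal.span_le, Set.range_subset_iff]
  rfl

theorem matEval_detPoly (v : Matrix (Fin n) (Fin n) K) : matEval v (detPoly n K) = v.det := by
  rw [detPoly, RingHom.map_det]
  congr 1
  ext i j
  simp [matEval]

theorem hatEval_eq_eval (v₀ : K) (v : Matrix (Fin n) (Fin n) K) :
    hatEval v₀ v = eval (hatPoint v₀ v) :=
  rfl

theorem hatEval_rename_some (v₀ : K) (v : Matrix (Fin n) (Fin n) K)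
    (g : MvPolynomial (Fin n × Fin n) K) : hatEval v₀ v (rename some g) = matEval v g := by
  rw [hatEval_eq_eval, eval_rename]
  rfl

theorem hatEval_fzero (v₀ : K) (v : Matrix (Fin n) (Fin n) K) :
    hatEval v₀ v (fzero n K) = v₀ * v.det - 1 := by
  rw [fzero, map_sub, map_mul, map_one, hatEval_rename_some, matEval_detPoly, hatEval_eq_eval,
    eval_X]
  rfl

theorem Ihat_le_ker_hatEval_iff (I : Ideal (MvPolynomial (Fin n × Fin n) K)) (v₀ : K)
    (v : Matrix (Fin n) (Fin n) K) :
    Ihat I ≤ RingHom.ker (hatEval v₀ v) ↔ v ∈ Vset I ∧ v₀ * v.det = 1 := by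
  rw [Ihat, sup_le_iff, Ideal.span_le, Set.singleton_subset_iff, SetLike.mem_coe, RingHom.mem_ker,
    hatEval_fzero, sub_eq_zero, mem_Vset_iff_le_ker, hatEval_eq_eval, map_rename_le_ker_eval_iff]
  rfl

theorem mem_Vstar_iff_exists_Ihat_le_ker (I : Ideal (MvPolynomial (Fin n × Fin n) K))
    (v : Matrix (Fin n) (Fin n) K) :
    v ∈ Vstar I ↔ ∃ v₀, Ihat I ≤ RingHom.ker (hatEval v₀ v) := by
  simp_rw [Ihat_le_ker_hatEval_iff, exists_and_left, Vstar, Set.mem_ofPred_eq,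
    Matrix.isUnit_iff_isUnit_det, isUnit_iff_exists_inv']

theorem eval_prodSubst (v₀ w₀ : K) (v w : Matrix (Fin n) (Fin n) K)
    (g : MvPolynomial (Fin n × Fin n) K) :
    eval (Sum.elim (hatPoint v₀ v) (hatPoint w₀ w)) (prodSubst n K g) = matEval (v * w) g := by
  rw [prodSubst, ← aeval_eq_eval, comp_aeval_apply, matEval, ← aeval_eq_eval]
  congr 1
  ext k
  simp [Xmat, Ymat, Matrix.mul_apply, hatPoint]

theorem prodSubst_mem_radical_Ihatxy_iff [IsAlgClosed K]
    (I : Ideal (MvPolynomial (Fin n × Fin n) K)) (g : MvPolynomial (Fin n × Fin n) K) :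
    prodSubst n K g ∈ (Ihatxy I).radical ↔
      ∀ v ∈ Vstar I, ∀ w ∈ Vstar I, matEval (v * w) g = 0 := by
  rw [mem_radical_iff_forall_eval_eq_zero]
  constructor
  · rintro h v hv w hw
    obtain ⟨v₀, hv₀⟩ := (mem_Vstar_iff_exists_Ihat_le_ker I v).mp hv
    obtain ⟨w₀, hw₀⟩ := (mem_Vstar_iff_exists_Ihat_le_ker I w).mp hw
    rw [← eval_prodSubst v₀ w₀]
    exact h _ ((map_rename_sum_le_ker_eval_iff _ _ _ _).mpr ⟨hv₀, hw₀⟩)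
  · intro h P hP
    obtain ⟨⟨v₀, v⟩, hv⟩ := hatPoint_surjective (P ∘ Sum.inl)
    obtain ⟨⟨w₀, w⟩, hw⟩ := hatPoint_surjective (P ∘ Sum.inr)
    obtain rfl : P = Sum.elim (hatPoint v₀ v) (hatPoint w₀ w) := by
      rw [← Sum.elim_comp_inl_inr P, ← hv, ← hw]
    obtain ⟨hv₀, hw₀⟩ := (map_rename_sum_le_ker_eval_iff _ _ _ _).mp hP
    rw [eval_prodSubst]
    exact h v ((mem_Vstar_iff_exists_Ihat_le_ker I v).mpr ⟨v₀, hv₀⟩)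
      w ((mem_Vstar_iff_exists_Ihat_le_ker I w).mpr ⟨w₀, hw₀⟩)

end

theorem stmt11_general {n : ℕ} {K : Type*} [Field K] [IsAlgClosed K]
    (r : ℕ) (f : Fin r → MvPolynomial (Fin n × Fin n) K)
    (I : Ideal (MvPolynomial (Fin n × Fin n) K)) (hI : I = Ideal.span (Set.range f)) :
    (∀ v ∈ Vstar I, ∀ w ∈ Vstar I, v * w ∈ Vstar I) ↔
      (∀ i : Fin r, prodSubst n K (f i) ∈ (Ihatxy I).radical) := by
  have mul_mem_Vstar_iff : ∀ v ∈ Vstar I, ∀ w ∈ Vstar I,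
      v * w ∈ Vstar I ↔ ∀ i, matEval (v * w) (f i) = 0 := by
    intro v hv w hw
    rw [← mem_Vset_span_range_iff, ← hI]
    exact and_iff_left (hv.2.mul hw.2)
  simp_rw [prodSubst_mem_radical_Ihatxy_iff]
  constructor
  · intro h i v hv w hw
    exact (mul_mem_Vstar_iff v hv w hw).mp (h v hv w hw) i
  · intro h v hv w hw
    exact (mul_mem_Vstar_iff v hv w hw).mpr fun i => h i v hv w hw

/-- `V*(I)` is closed under multiplication iff `fᵢ(xy) ∈ √(Î_xy)` for every `i`. -/
theorem stmt11 {n : ℕ} (hn : 1 ≤ n) {K : Type*} [Field K] [IsAlgClosed K]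
    (r : ℕ) (f : Fin r → MvPolynomial (Fin n × Fin n) K)
    (I : Ideal (MvPolynomial (Fin n × Fin n) K)) (hI : I = Ideal.span (Set.range f)) :
    (∀ v ∈ Vstar I, ∀ w ∈ Vstar I, v * w ∈ Vstar I) ↔
      (∀ i : Fin r, prodSubst n K (f i) ∈ (Ihatxy I).radical) :=
  stmt11_general r f I hI
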